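/- arXiv:1305.0078 — 2 statements merged into one kernel-verified Lean document; each statement's English description precedes it below -/
import Mathlib

section
/- Let p > 1, ε ≥ 0, and let n, N ≥ 1 be integers. Let w = (w_i^l)_{1≤i≤n, 1≤l≤N} ∈ ℝ^{nN} be such that h := (ε + |w|²)^{1/2} > 0, where |w|² = Σ_{i,l} (w_i^l)². Define, for 1 ≤ i,j ≤ n and 1 ≤ l,m ≤ N, b_{ij}^{lm} = h^{p-4} ( (p-2) w_j^m w_i^l + δ_{ij}^{lm} (ε + |w|²) ), where δ_{ij}^{lm} = 1 if i = j and l = m, and 0 otherwise. Then for every ξ = (ξ_i^l) ∈ ℝ^{nN}, min(p-1, 1) |ξ|² h^{p-2} ≤ Σ_{l,m=1}^N Σ_{i,j=1}^n b_{ij}^{lm} ξ_i^l ξ_j^m ≤ max(p-1, 1) |ξ|² h^{p-2}. -/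
theorem stmt_0 (n N : ℕ) (hn : 1 ≤ n) (hN : 1 ≤ N) (p ε : ℝ) (hp : 1 < p) (hε : 0 ≤ ε)
    (w : Fin n → Fin N → ℝ) (h : ℝ)
    (hh : h = Real.sqrt (ε + ∑ i, ∑ l, w i l ^ 2)) (hpos : 0 < h)
    (b : Fin n → Fin n → Fin N → Fin N → ℝ)
    (hb : ∀ i j l m, b i j l m =
      h ^ (p - 4) * ((p - 2) * w j m * w i l +
        (if i = j ∧ l = m then (1 : ℝ) else 0) * (ε + ∑ i', ∑ l', w i' l' ^ 2)))
    (ξ : Fin n → Fin N → ℝ) :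
    min (p - 1) 1 * (∑ i, ∑ l, ξ i l ^ 2) * h ^ (p - 2) ≤
        ∑ l, ∑ m, ∑ i, ∑ j, b i j l m * ξ i l * ξ j m ∧
      ∑ l, ∑ m, ∑ i, ∑ j, b i j l m * ξ i l * ξ j m ≤
        max (p - 1) 1 * (∑ i, ∑ l, ξ i l ^ 2) * h ^ (p - 2) := by
  set W : ℝ := ε + ∑ i, ∑ l, w i l ^ 2 with hWdef
  set S : ℝ := ∑ i, ∑ l, w i l * ξ i l with hSdef
  set X : ℝ := ∑ i, ∑ l, ξ i l ^ 2 with hXdef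
  have hW0 : 0 ≤ W := add_nonneg hε (Finset.sum_nonneg fun i _ =>
    Finset.sum_nonneg fun l _ => sq_nonneg _)
  have hX0 : 0 ≤ X := Finset.sum_nonneg fun i _ => Finset.sum_nonneg fun l _ => sq_nonneg _
  have hWh : W = h ^ 2 := by rw [hh, Real.sq_sqrt hW0]
  clear_value W S X
  -- Cauchy–Schwarz: S^2 ≤ W * X
  have hCS : S * S ≤ W * X := by
    have h1 : S ^ 2 ≤ (∑ i, ∑ l, w i l ^ 2) * X := by
      have := Finset.sum_mul_sq_le_sq_mul_sq Finset.univ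
        (fun x : Fin n × Fin N => w x.1 x.2) (fun x : Fin n × Fin N => ξ x.1 x.2)
      simpa [Fintype.sum_prod_type, hSdef, hXdef] using this
    have h2 : (∑ i, ∑ l, w i l ^ 2) * X ≤ W * X := by
      apply mul_le_mul_of_nonneg_right _ hX0
      rw [hWdef]; linarith
    calc S * S = S ^ 2 := (sq S).symm
      _ ≤ _ := h1
      _ ≤ _ := h2
  have hp4 : (0:ℝ) < h ^ (p - 4) := Real.rpow_pos_of_pos hpos _
  have hcomb : h ^ (p - 4) * W = h ^ (p - 2) := by
    rw [hWh, ← Real.rpow_natCast h 2, ← Real.rpow_add hpos]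
    ring_nf
  -- the key algebraic identity
  have key : (∑ l, ∑ m, ∑ i, ∑ j, b i j l m * ξ i l * ξ j m)
      = h ^ (p - 4) * ((p - 2) * (S * S) + W * X) := by
    have e1 : ∀ (l m : Fin N) (i j : Fin n), b i j l m * ξ i l * ξ j m =
        h ^ (p - 4) * ((p - 2) * ((w i l * ξ i l) * (w j m * ξ j m))) +
        (h ^ (p - 4) * W) * ((if i = j ∧ l = m then (1:ℝ) else 0) * (ξ i l * ξ j m)) := by
      intro l m i j; rw [hb]; ring
    simp_rw [e1, Finset.sum_add_distrib]
    have first : (∑ l, ∑ m, ∑ i, ∑ j, (w i l * ξ i l) * (w j m * ξ j m)) = S * S := by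
      rw [hSdef, show (∑ i, ∑ l, w i l * ξ i l) = ∑ l, ∑ i, w i l * ξ i l from
        Finset.sum_comm, Finset.sum_mul_sum]
      simp_rw [Finset.sum_mul_sum]
    have second :
        (∑ l, ∑ m, ∑ i, ∑ j, (if i = j ∧ l = m then (1:ℝ) else 0) * (ξ i l * ξ j m)) = X := by
      simp only [ite_and, ite_mul, one_mul, zero_mul, Finset.sum_ite_eq, Finset.sum_ite_eq',
        Finset.mem_univ, if_true, Finset.sum_ite_irrel, Finset.sum_const_zero]
      rw [Finset.sum_comm, hXdef]
      simp [sq]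
    rw [mul_add, ← first, ← second]
    simp only [Finset.mul_sum, mul_add, mul_assoc]
  have hS2 : 0 ≤ S * S := mul_self_nonneg S
  rcases le_total p 2 with h2 | h2
  · have hmin : min (p - 1) 1 = p - 1 := min_eq_left (by linarith)
    have hmax : max (p - 1) 1 = 1 := max_eq_right (by linarith)
    rw [hmin, hmax, key]
    constructor
    · have hd : h ^ (p - 4) * ((p - 2) * (S * S) + W * X) - (p - 1) * X * h ^ (p - 2)
          = (2 - p) * (h ^ (p - 4) * (W * X - S * S)) := by rw [← hcomb]; ring
      nlinarith [mul_nonneg (by linarith : (0:ℝ) ≤ 2 - p)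
        (mul_nonneg hp4.le (by linarith : (0:ℝ) ≤ W * X - S * S))]
    · have hd : 1 * X * h ^ (p - 2) - h ^ (p - 4) * ((p - 2) * (S * S) + W * X)
          = (2 - p) * (h ^ (p - 4) * (S * S)) := by rw [← hcomb]; ring
      nlinarith [mul_nonneg (by linarith : (0:ℝ) ≤ 2 - p) (mul_nonneg hp4.le hS2)]
  · have hmin : min (p - 1) 1 = 1 := min_eq_right (by linarith)
    have hmax : max (p - 1) 1 = p - 1 := max_eq_left (by linarith)
    rw [hmin, hmax, key]
    constructor
    · have hd : h ^ (p - 4) * ((p - 2) * (S * S) + W * X) - 1 * X * h ^ (p - 2)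
          = (p - 2) * (h ^ (p - 4) * (S * S)) := by rw [← hcomb]; ring
      nlinarith [mul_nonneg (by linarith : (0:ℝ) ≤ p - 2) (mul_nonneg hp4.le hS2)]
    · have hd : (p - 1) * X * h ^ (p - 2) - h ^ (p - 4) * ((p - 2) * (S * S) + W * X)
          = (p - 2) * (h ^ (p - 4) * (W * X - S * S)) := by rw [← hcomb]; ring
      nlinarith [mul_nonneg (by linarith : (0:ℝ) ≤ p - 2)
        (mul_nonneg hp4.le (by linarith : (0:ℝ) ≤ W * X - S * S))]
end

section
/- Let n, N ≥ 1, ε > 0, p > 1, let U ⊆ ℝⁿ be open, and let u = (u¹, …, u^N) : U → ℝ^N be C^∞ and satisfy the regularized p-Laplace system pointwise on U: Σ_{i=1}^n ∂/∂x_i ( (ε + |∇u|²)^{p/2 - 1} ∂u^l/∂x_i ) = 0 on U for every 1 ≤ l ≤ N. Set h = (ε + |∇u|²)^{1/2}, define c_{ij}(x) = (ε + |∇u(x)|²)^{-1} [ (p-2) Σ_{l=1}^N u^l_{x_i}(x) u^l_{x_j}(x) + δ_{ij} (ε + |∇u(x)|²) ], and let L(f) = Σ_{i,j=1}^n ∂/∂x_i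 ( c_{ij} ∂f/∂x_j ). Then pointwise on U: L(h^p) ≥ p · min(1, p-1) · h^{p-2} |∇h|². -/
/-- The regularized `p`-Laplace system
`∑ᵢ ∂/∂xᵢ ((ε + |∇u|²)^{p/2-1} ∂uˡ/∂xᵢ) = 0` holding pointwise on `U`. -/
def pLapSys (n N : ℕ) (ε p : ℝ) (U : Set (EuclideanSpace ℝ (Fin n)))
    (u : Fin N → EuclideanSpace ℝ (Fin n) → ℝ) : Prop :=
  ∀ x ∈ U, ∀ l : Fin N,
    ∑ i : Fin n,
      fderiv ℝ
        (fun y =>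
          (ε + ∑ i' : Fin n, ∑ l' : Fin N,
              (fderiv ℝ (u l') y (EuclideanSpace.single i' 1)) ^ 2) ^ (p / 2 - 1) *
            fderiv ℝ (u l) y (EuclideanSpace.single i 1))
        x (EuclideanSpace.single i 1) = 0

open Filter Finset

section Toolkit
variable {E : Type*} [NormedAddCommGroup E] [NormedSpace ℝ E] {x w : E}

lemma fda_mul {f g : E → ℝ} (hf : DifferentiableAt ℝ f x) (hg : DifferentiableAt ℝ g x) (w : E) :
    fderiv ℝ (fun y => f y * g y) x w
      = fderiv ℝ f x w * g x + f x * fderiv ℝ g x w := by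
  rw [fderiv_fun_mul hf hg]; simp [mul_comm]; ring

lemma fda_sum {ι : Type*} (s : Finset ι) {f : ι → E → ℝ}
    (hf : ∀ i ∈ s, DifferentiableAt ℝ (f i) x) (w : E) :
    fderiv ℝ (fun y => ∑ i ∈ s, f i y) x w = ∑ i ∈ s, fderiv ℝ (f i) x w := by
  rw [fderiv_fun_sum hf]; simp

lemma fda_rpow {f : E → ℝ} (hf : DifferentiableAt ℝ f x) (hx : f x ≠ 0) (r : ℝ) (w : E) :
    fderiv ℝ (fun y => f y ^ r) x w = r * f x ^ (r - 1) * fderiv ℝ f x w := by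
  have := ((Real.hasDerivAt_rpow_const (p := r) (Or.inl hx)).comp_hasFDerivAt x
    hf.hasFDerivAt).fderiv
  rw [show (fun y => f y ^ r) = (fun t => t ^ r) ∘ f from rfl, this]; simp [mul_assoc]

lemma diff_rpow {f : E → ℝ} (hf : DifferentiableAt ℝ f x) (hx : f x ≠ 0) (r : ℝ) :
    DifferentiableAt ℝ (fun y => f y ^ r) x :=
  ((Real.hasDerivAt_rpow_const (p := r) (Or.inl hx)).comp_hasFDerivAt x
    hf.hasFDerivAt).differentiableAt

lemma fda_sqrt {f : E → ℝ} (hf : DifferentiableAt ℝ f x) (hx : f x ≠ 0) (w : E) :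
    fderiv ℝ (fun y => Real.sqrt (f y)) x w
      = 1 / (2 * Real.sqrt (f x)) * fderiv ℝ f x w := by
  have h2 : fderiv ℝ (fun y => Real.sqrt (f y)) x = (1 / (2 * Real.sqrt (f x))) • fderiv ℝ f x :=
    ((Real.hasDerivAt_sqrt hx).comp_hasFDerivAt x hf.hasFDerivAt).fderiv
  rw [h2]; simp

lemma fda_sq {f : E → ℝ} (hf : DifferentiableAt ℝ f x) (w : E) :
    fderiv ℝ (fun y => f y ^ 2) x w = 2 * f x * fderiv ℝ f x w := by
  have : (fun y => f y ^ 2) = fun y => f y * f y := by funext y; ring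
  rw [this, fda_mul hf hf]; ring

lemma fda_deriv_apply {f : E → ℝ} (hf : DifferentiableAt ℝ (fderiv ℝ f) x) (v w : E) :
    fderiv ℝ (fun y => fderiv ℝ f y v) x w = fderiv ℝ (fderiv ℝ f) x w v := by
  rw [fderiv_clm_apply hf (differentiableAt_const v)]; simp

lemma fda_swap {f : E → ℝ} (hf : ContDiffAt ℝ 2 f x) (v w : E) :
    fderiv ℝ (fun y => fderiv ℝ f y v) x w = fderiv ℝ (fun y => fderiv ℝ f y w) x v := by
  have hd : DifferentiableAt ℝ (fderiv ℝ f) x :=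
    (hf.fderiv_right (m := 1) (by norm_num)).differentiableAt one_ne_zero
  rw [fda_deriv_apply hd, fda_deriv_apply hd, hf.isSymmSndFDerivAt (by simp)]

lemma diff_fderiv_apply {f : E → ℝ} (hf : ContDiffAt ℝ 2 f x) (v : E) :
    DifferentiableAt ℝ (fun y => fderiv ℝ f y v) x :=
  (((hf.fderiv_right (m := 1) (by norm_num)).clm_apply
    (contDiffAt_const (c := v))).differentiableAt one_ne_zero)

end Toolkit

noncomputable section Stmt9Aux

variable (n N : ℕ) (ε p : ℝ) (u : Fin N → EuclideanSpace ℝ (Fin n) → ℝ)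

def ee (n : ℕ) (i : Fin n) : EuclideanSpace ℝ (Fin n) := EuclideanSpace.single i 1

def Af (l : Fin N) (i : Fin n) (y : EuclideanSpace ℝ (Fin n)) : ℝ :=
  fderiv ℝ (u l) y (ee n i)

def qf (y : EuclideanSpace ℝ (Fin n)) : ℝ := ε + ∑ i, ∑ l, Af n N u l i y ^ 2

def Bf (l : Fin N) (i j : Fin n) (y : EuclideanSpace ℝ (Fin n)) : ℝ :=
  fderiv ℝ (Af n N u l i) y (ee n j)

def gf (l : Fin N) (i : Fin n) (y : EuclideanSpace ℝ (Fin n)) : ℝ :=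
  qf n N ε u y ^ (p / 2 - 1) * Af n N u l i y

variable {n N ε p u}
variable {U : Set (EuclideanSpace ℝ (Fin n))}

lemma qf_pos (hε : 0 < ε) (y : EuclideanSpace ℝ (Fin n)) : 0 < qf n N ε u y := by
  have : (0:ℝ) ≤ ∑ i, ∑ l, Af n N u l i y ^ 2 := by positivity
  unfold qf; linarith

lemma smoothA (hU : IsOpen U) (hu : ∀ l, ContDiffOn ℝ (⊤ : ℕ∞) (u l) U) (m : ℕ∞)
    (l : Fin N) (i : Fin n) {x : EuclideanSpace ℝ (Fin n)} (hx : x ∈ U) :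
    ContDiffAt ℝ m (Af n N u l i) x := by
  have h1 : ContDiffOn ℝ m (fderiv ℝ (u l)) U := (hu l).fderiv_of_isOpen hU (by exact_mod_cast le_top)
  have h2 : ContDiffOn ℝ m (Af n N u l i) U := h1.clm_apply contDiffOn_const
  exact h2.contDiffAt (hU.mem_nhds hx)

lemma smoothq (hU : IsOpen U) (hu : ∀ l, ContDiffOn ℝ (⊤ : ℕ∞) (u l) U) (m : ℕ∞)
    {x : EuclideanSpace ℝ (Fin n)} (hx : x ∈ U) :
    ContDiffAt ℝ m (qf n N ε u) x := by
  unfold qf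
  exact contDiffAt_const.add (ContDiffAt.sum fun i _ => ContDiffAt.sum fun l _ =>
    (smoothA hU hu m l i hx).pow 2)

lemma smoothg (hε : 0 < ε) (hU : IsOpen U) (hu : ∀ l, ContDiffOn ℝ (⊤ : ℕ∞) (u l) U) (m : ℕ∞)
    (l : Fin N) (i : Fin n) {x : EuclideanSpace ℝ (Fin n)} (hx : x ∈ U) :
    ContDiffAt ℝ m (gf n N ε p u l i) x := by
  unfold gf
  exact ((smoothq hU hu m hx).rpow_const_of_ne (qf_pos hε x).ne').mul (smoothA hU hu m l i hx)


lemma diffA (hU : IsOpen U) (hu : ∀ l, ContDiffOn ℝ (⊤ : ℕ∞) (u l) U)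
    (l : Fin N) (i : Fin n) {x : EuclideanSpace ℝ (Fin n)} (hx : x ∈ U) :
    DifferentiableAt ℝ (Af n N u l i) x :=
  (smoothA hU hu 1 l i hx).differentiableAt one_ne_zero

lemma diffq (hU : IsOpen U) (hu : ∀ l, ContDiffOn ℝ (⊤ : ℕ∞) (u l) U)
    {x : EuclideanSpace ℝ (Fin n)} (hx : x ∈ U) :
    DifferentiableAt ℝ (qf n N ε u) x :=
  (smoothq hU hu 1 hx).differentiableAt one_ne_zero

lemma dqf (hU : IsOpen U) (hu : ∀ l, ContDiffOn ℝ (⊤ : ℕ∞) (u l) U)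
    {x : EuclideanSpace ℝ (Fin n)} (hx : x ∈ U) (j : Fin n) :
    fderiv ℝ (qf n N ε u) x (ee n j) = ∑ i, ∑ l, 2 * Af n N u l i x * Bf n N u l i j x := by
  unfold qf
  rw [fderiv_const_add]
  rw [fda_sum univ (fun i _ => DifferentiableAt.fun_sum fun l _ => (diffA hU hu l i hx).fun_pow 2)]
  refine Finset.sum_congr rfl fun i _ => ?_
  rw [fda_sum univ (fun l _ => (diffA hU hu l i hx).fun_pow 2)]
  refine Finset.sum_congr rfl fun l _ => ?_
  rw [fda_sq (diffA hU hu l i hx)]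
  rfl

lemma symB (hU : IsOpen U) (hu : ∀ l, ContDiffOn ℝ (⊤ : ℕ∞) (u l) U)
    (l : Fin N) (i j : Fin n) {x : EuclideanSpace ℝ (Fin n)} (hx : x ∈ U) :
    Bf n N u l i j x = Bf n N u l j i x := by
  have h2 : ContDiffAt ℝ 2 (u l) x := ((hu l).contDiffAt (hU.mem_nhds hx)).of_le (WithTop.coe_le_coe.2 le_top)
  show fderiv ℝ (fun y => fderiv ℝ (u l) y (ee n i)) x (ee n j)
      = fderiv ℝ (fun y => fderiv ℝ (u l) y (ee n j)) x (ee n i)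
  exact fda_swap h2 _ _

lemma dgf (hε : 0 < ε) (hU : IsOpen U) (hu : ∀ l, ContDiffOn ℝ (⊤ : ℕ∞) (u l) U)
    (l : Fin N) (i k : Fin n) {x : EuclideanSpace ℝ (Fin n)} (hx : x ∈ U) :
    fderiv ℝ (gf n N ε p u l i) x (ee n k)
      = (p / 2 - 1) * qf n N ε u x ^ (p / 2 - 2) * fderiv ℝ (qf n N ε u) x (ee n k)
          * Af n N u l i x
        + qf n N ε u x ^ (p / 2 - 1) * Bf n N u l i k x := by
  have hq := (qf_pos (u := u) (n := n) (N := N) hε x).ne'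
  have dq : DifferentiableAt ℝ (qf n N ε u) x := diffq hU hu hx
  unfold gf
  rw [fda_mul (diff_rpow dq hq _) (diffA hU hu l i hx), fda_rpow dq hq]
  rw [show p / 2 - 1 - 1 = p / 2 - 2 by ring]
  show _ = _ + qf n N ε u x ^ (p / 2 - 1) * fderiv ℝ (Af n N u l i) x (ee n k)
  ring

lemma keyswap (hε : 0 < ε) (hU : IsOpen U) (hu : ∀ l, ContDiffOn ℝ (⊤ : ℕ∞) (u l) U)
    (hsys : ∀ x ∈ U, ∀ l : Fin N, ∑ i, fderiv ℝ (gf n N ε p u l i) x (ee n i) = 0)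
    (l : Fin N) (k : Fin n) {x : EuclideanSpace ℝ (Fin n)} (hx : x ∈ U) :
    ∑ i, fderiv ℝ (fun y => fderiv ℝ (gf n N ε p u l i) y (ee n k)) x (ee n i) = 0 := by
  have hgi : ∀ i : Fin n, ContDiffAt ℝ 2 (gf n N ε p u l i) x :=
    fun i => smoothg hε hU hu 2 l i hx
  rw [Finset.sum_congr rfl fun i (_ : i ∈ univ) => fda_swap (hgi i) (ee n k) (ee n i)]
  have hsum := fda_sum (x := x) univ
    (f := fun i y => fderiv ℝ (gf n N ε p u l i) y (ee n i))
    (fun i _ => diff_fderiv_apply (hgi i) (ee n i)) (ee n k)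
  rw [← hsum]
  have hzero : fderiv ℝ (fun y => ∑ i, fderiv ℝ (gf n N ε p u l i) y (ee n i)) x
      = fderiv ℝ (fun _ => (0 : ℝ)) x := by
    apply Filter.EventuallyEq.fderiv_eq
    filter_upwards [hU.mem_nhds hx] with y hy
    exact hsys y hy l
  rw [hzero, fderiv_fun_const]
  simp

def vf (n N : ℕ) (ε p : ℝ) (u : Fin N → EuclideanSpace ℝ (Fin n) → ℝ)
    (y : EuclideanSpace ℝ (Fin n)) : ℝ := qf n N ε u y ^ (p / 2)

lemma smoothv (hε : 0 < ε) (hU : IsOpen U) (hu : ∀ l, ContDiffOn ℝ (⊤ : ℕ∞) (u l) U)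
    (m : ℕ∞) {x : EuclideanSpace ℝ (Fin n)} (hx : x ∈ U) :
    ContDiffAt ℝ m (vf n N ε p u) x := by
  unfold vf
  exact (smoothq hU hu m hx).rpow_const_of_ne (qf_pos hε x).ne'

lemma dvf (hε : 0 < ε) (hU : IsOpen U) (hu : ∀ l, ContDiffOn ℝ (⊤ : ℕ∞) (u l) U)
    {x : EuclideanSpace ℝ (Fin n)} (hx : x ∈ U) (j : Fin n) :
    fderiv ℝ (vf n N ε p u) x (ee n j)
      = p / 2 * qf n N ε u x ^ (p / 2 - 1) * fderiv ℝ (qf n N ε u) x (ee n j) := by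
  unfold vf
  rw [fda_rpow (diffq hU hu hx) (qf_pos hε x).ne']

lemma sigmaId (hε : 0 < ε) (hU : IsOpen U) (hu : ∀ l, ContDiffOn ℝ (⊤ : ℕ∞) (u l) U)
    (c : Fin n → Fin n → EuclideanSpace ℝ (Fin n) → ℝ)
    (hc' : ∀ (i j : Fin n) (y : EuclideanSpace ℝ (Fin n)), c i j y =
      (qf n N ε u y)⁻¹ * ((p - 2) * ∑ l, Af n N u l i y * Af n N u l j y +
        (if i = j then (1:ℝ) else 0) * qf n N ε u y))
    {y : EuclideanSpace ℝ (Fin n)} (hy : y ∈ U) (i : Fin n) :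
    ∑ j, c i j y * fderiv ℝ (vf n N ε p u) y (ee n j)
      = p * ∑ l, ∑ k, Af n N u l k y * fderiv ℝ (gf n N ε p u l i) y (ee n k) := by
  have hQpos : 0 < qf n N ε u y := qf_pos hε y
  have hQ : qf n N ε u y ≠ 0 := hQpos.ne'
  have e1 : qf n N ε u y ^ (p / 2 - 1) * (qf n N ε u y)⁻¹ = qf n N ε u y ^ (p / 2 - 2) := by
    rw [show (qf n N ε u y)⁻¹ = qf n N ε u y ^ (-1 : ℝ) by rw [Real.rpow_neg_one],
      ← Real.rpow_add hQpos]
    congr 1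
    ring
  have e2 : qf n N ε u y * (qf n N ε u y)⁻¹ = 1 := mul_inv_cancel₀ hQ
  have step : ∀ j, c i j y * fderiv ℝ (vf n N ε p u) y (ee n j)
      = p / 2 * (p - 2) * qf n N ε u y ^ (p / 2 - 2)
          * (fderiv ℝ (qf n N ε u) y (ee n j) * ∑ l, Af n N u l i y * Af n N u l j y)
        + (if i = j then (1:ℝ) else 0)
          * (p / 2 * qf n N ε u y ^ (p / 2 - 1) * fderiv ℝ (qf n N ε u) y (ee n j)) := by
    intro j
    rw [hc' i j y, dvf hε hU hu hy j]
    have expand : ∀ Q Qi Qp1 Qp2 S D δ : ℝ, Qp1 * Qi = Qp2 → Q * Qi = 1 →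
        Qi * ((p - 2) * S + δ * Q) * (p / 2 * Qp1 * D)
          = p / 2 * (p - 2) * Qp2 * (D * S) + δ * (p / 2 * Qp1 * D) := by
      intro Q Qi Qp1 Qp2 S D δ h1 h2
      have : Qi * ((p - 2) * S + δ * Q) * (p / 2 * Qp1 * D)
          = p / 2 * (p - 2) * (Qp1 * Qi) * (D * S) + δ * ((Q * Qi) * (p / 2 * Qp1 * D)) := by
        ring
      rw [this, h1, h2]; ring
    exact expand _ _ _ _ _ _ _ e1 e2
  rw [Finset.sum_congr rfl fun j _ => step j, Finset.sum_add_distrib]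
  have hdelta : (∑ j, (if i = j then (1:ℝ) else 0)
      * (p / 2 * qf n N ε u y ^ (p / 2 - 1) * fderiv ℝ (qf n N ε u) y (ee n j)))
      = p / 2 * qf n N ε u y ^ (p / 2 - 1) * fderiv ℝ (qf n N ε u) y (ee n i) := by
    simp [Finset.sum_ite_eq]
  rw [hdelta, ← Finset.mul_sum]
  have hRHS : p * ∑ l, ∑ k, Af n N u l k y * fderiv ℝ (gf n N ε p u l i) y (ee n k)
      = p * ((p / 2 - 1) * qf n N ε u y ^ (p / 2 - 2)
          * ∑ l, ∑ k, fderiv ℝ (qf n N ε u) y (ee n k) * (Af n N u l i y * Af n N u l k y)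
        + qf n N ε u y ^ (p / 2 - 1) * ∑ l, ∑ k, Af n N u l k y * Bf n N u l i k y) := by
    have hterm : ∀ l k, Af n N u l k y * fderiv ℝ (gf n N ε p u l i) y (ee n k)
        = (p / 2 - 1) * qf n N ε u y ^ (p / 2 - 2)
            * (fderiv ℝ (qf n N ε u) y (ee n k) * (Af n N u l i y * Af n N u l k y))
          + qf n N ε u y ^ (p / 2 - 1) * (Af n N u l k y * Bf n N u l i k y) := by
      intro l k
      rw [dgf hε hU hu l i k hy]
      ring
    rw [Finset.sum_congr rfl fun l _ => Finset.sum_congr rfl fun k _ => hterm l k]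
    simp only [Finset.sum_add_distrib, ← Finset.mul_sum]
  rw [hRHS]
  have swap1 : (∑ j, fderiv ℝ (qf n N ε u) y (ee n j) * ∑ l, Af n N u l i y * Af n N u l j y)
      = ∑ l, ∑ k, fderiv ℝ (qf n N ε u) y (ee n k) * (Af n N u l i y * Af n N u l k y) := by
    rw [Finset.sum_congr rfl fun j (_ : j ∈ univ) =>
      Finset.mul_sum univ (fun l => Af n N u l i y * Af n N u l j y)
        (fderiv ℝ (qf n N ε u) y (ee n j))]
    exact Finset.sum_comm
  have hDqi : fderiv ℝ (qf n N ε u) y (ee n i)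
      = 2 * ∑ l, ∑ k, Af n N u l k y * Bf n N u l i k y := by
    rw [dqf hU hu hy i, Finset.sum_comm, Finset.mul_sum]
    refine Finset.sum_congr rfl fun l _ => ?_
    rw [Finset.mul_sum]
    refine Finset.sum_congr rfl fun k _ => ?_
    rw [symB hU hu l k i hy]
    ring
  rw [swap1, hDqi]
  ring

lemma fda_const_mul {E : Type*} [NormedAddCommGroup E] [NormedSpace ℝ E] {x w : E}
    {f : E → ℝ} (hf : DifferentiableAt ℝ f x) (cst : ℝ) :
    fderiv ℝ (fun y => cst * f y) x w = cst * fderiv ℝ f x w := by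
  rw [fderiv_const_mul hf cst]; simp

lemma diffgk (hε : 0 < ε) (hU : IsOpen U) (hu : ∀ l, ContDiffOn ℝ (⊤ : ℕ∞) (u l) U)
    (l : Fin N) (i k : Fin n) {x : EuclideanSpace ℝ (Fin n)} (hx : x ∈ U) :
    DifferentiableAt ℝ (fun y => fderiv ℝ (gf n N ε p u l i) y (ee n k)) x :=
  diff_fderiv_apply (smoothg hε hU hu 2 l i hx) _

lemma dRi (hε : 0 < ε) (hU : IsOpen U) (hu : ∀ l, ContDiffOn ℝ (⊤ : ℕ∞) (u l) U)
    (i : Fin n) {x : EuclideanSpace ℝ (Fin n)} (hx : x ∈ U) :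
    fderiv ℝ (fun y => p * ∑ l, ∑ k, Af n N u l k y
        * fderiv ℝ (gf n N ε p u l i) y (ee n k)) x (ee n i)
      = p * ∑ l, ∑ k, (Bf n N u l k i x * fderiv ℝ (gf n N ε p u l i) x (ee n k)
        + Af n N u l k x
          * fderiv ℝ (fun y => fderiv ℝ (gf n N ε p u l i) y (ee n k)) x (ee n i)) := by
  have hparts : ∀ (l : Fin N) (k : Fin n), DifferentiableAt ℝ
      (fun y => Af n N u l k y * fderiv ℝ (gf n N ε p u l i) y (ee n k)) x :=
    fun l k => (diffA hU hu l k hx).mul (diffgk hε hU hu l i k hx)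
  rw [fda_const_mul (by exact DifferentiableAt.fun_sum fun l _ =>
    DifferentiableAt.fun_sum fun k _ => hparts l k) p]
  congr 1
  rw [fda_sum univ (fun l _ => DifferentiableAt.fun_sum fun k _ => hparts l k)]
  refine Finset.sum_congr rfl fun l _ => ?_
  rw [fda_sum univ (fun k _ => hparts l k)]
  refine Finset.sum_congr rfl fun k _ => ?_
  rw [fda_mul (diffA hU hu l k hx) (diffgk hε hU hu l i k hx)]
  rfl

lemma LvalFormula (hε : 0 < ε) (hU : IsOpen U) (hu : ∀ l, ContDiffOn ℝ (⊤ : ℕ∞) (u l) U)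
    (hsys : ∀ x ∈ U, ∀ l : Fin N, ∑ i, fderiv ℝ (gf n N ε p u l i) x (ee n i) = 0)
    {x : EuclideanSpace ℝ (Fin n)} (hx : x ∈ U) :
    ∑ i, fderiv ℝ (fun y => p * ∑ l, ∑ k, Af n N u l k y
        * fderiv ℝ (gf n N ε p u l i) y (ee n k)) x (ee n i)
      = p * (p / 2 - 1) * qf n N ε u x ^ (p / 2 - 2)
          * ∑ k, fderiv ℝ (qf n N ε u) x (ee n k) * (fderiv ℝ (qf n N ε u) x (ee n k) / 2)
        + p * qf n N ε u x ^ (p / 2 - 1) * ∑ i, ∑ l, ∑ k, Bf n N u l i k x ^ 2 := by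
  rw [Finset.sum_congr rfl fun i (_ : i ∈ univ) => dRi hε hU hu i hx]
  have split : ∀ i : Fin n, (p : ℝ) * ∑ l, ∑ k,
      (Bf n N u l k i x * fderiv ℝ (gf n N ε p u l i) x (ee n k)
        + Af n N u l k x * fderiv ℝ (fun y => fderiv ℝ (gf n N ε p u l i) y (ee n k)) x (ee n i))
      = p * (∑ l, ∑ k, Bf n N u l k i x * fderiv ℝ (gf n N ε p u l i) x (ee n k))
        + p * (∑ l, ∑ k, Af n N u l k x
            * fderiv ℝ (fun y => fderiv ℝ (gf n N ε p u l i) y (ee n k)) x (ee n i)) := by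
    intro i
    simp only [Finset.sum_add_distrib]
    ring
  rw [Finset.sum_congr rfl fun i (_ : i ∈ univ) => split i, Finset.sum_add_distrib]
  have hT2 : ∑ i, p * (∑ l, ∑ k, Af n N u l k x
      * fderiv ℝ (fun y => fderiv ℝ (gf n N ε p u l i) y (ee n k)) x (ee n i)) = 0 := by
    have inner0 : ∀ i : Fin n, ∀ l : Fin N, ∀ k : Fin n, True := fun _ _ _ => trivial
    have hswap : ∑ i, ∑ l, ∑ k, Af n N u l k x
        * fderiv ℝ (fun y => fderiv ℝ (gf n N ε p u l i) y (ee n k)) x (ee n i)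
        = ∑ l, ∑ k, Af n N u l k x * (∑ i, fderiv ℝ
            (fun y => fderiv ℝ (gf n N ε p u l i) y (ee n k)) x (ee n i)) := by
      rw [Finset.sum_comm]
      refine Finset.sum_congr rfl fun l _ => ?_
      rw [Finset.sum_comm]
      refine Finset.sum_congr rfl fun k _ => ?_
      rw [Finset.mul_sum]
    have : ∑ i, p * (∑ l, ∑ k, Af n N u l k x
        * fderiv ℝ (fun y => fderiv ℝ (gf n N ε p u l i) y (ee n k)) x (ee n i))
        = p * ∑ i, ∑ l, ∑ k, Af n N u l k x
          * fderiv ℝ (fun y => fderiv ℝ (gf n N ε p u l i) y (ee n k)) x (ee n i) := by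
      rw [Finset.mul_sum]
    rw [this, hswap]
    have : ∀ l : Fin N, ∀ k : Fin n, Af n N u l k x * (∑ i, fderiv ℝ
        (fun y => fderiv ℝ (gf n N ε p u l i) y (ee n k)) x (ee n i)) = 0 := by
      intro l k
      rw [keyswap hε hU hu hsys l k hx, mul_zero]
    rw [Finset.sum_congr rfl fun l _ => Finset.sum_congr rfl fun k _ => this l k]
    simp
  rw [hT2, add_zero]
  -- now handle the B-part
  have htermB : ∀ (i : Fin n) (l : Fin N) (k : Fin n),
      Bf n N u l k i x * fderiv ℝ (gf n N ε p u l i) x (ee n k)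
      = (p / 2 - 1) * qf n N ε u x ^ (p / 2 - 2)
          * (fderiv ℝ (qf n N ε u) x (ee n k) * (Af n N u l i x * Bf n N u l i k x))
        + qf n N ε u x ^ (p / 2 - 1) * Bf n N u l i k x ^ 2 := by
    intro i l k
    rw [symB hU hu l k i hx, dgf hε hU hu l i k hx]
    ring
  rw [Finset.sum_congr rfl fun i (_ : i ∈ univ) => congrArg (p * ·)
    (Finset.sum_congr rfl fun l _ => Finset.sum_congr rfl fun k _ => htermB i l k)]
  have expand : ∑ i, p * (∑ l, ∑ k,
      ((p / 2 - 1) * qf n N ε u x ^ (p / 2 - 2)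
          * (fderiv ℝ (qf n N ε u) x (ee n k) * (Af n N u l i x * Bf n N u l i k x))
        + qf n N ε u x ^ (p / 2 - 1) * Bf n N u l i k x ^ 2))
      = p * (p / 2 - 1) * qf n N ε u x ^ (p / 2 - 2)
          * (∑ i, ∑ l, ∑ k, fderiv ℝ (qf n N ε u) x (ee n k)
              * (Af n N u l i x * Bf n N u l i k x))
        + p * qf n N ε u x ^ (p / 2 - 1) * ∑ i, ∑ l, ∑ k, Bf n N u l i k x ^ 2 := by
    simp only [Finset.sum_add_distrib, ← Finset.mul_sum, Finset.mul_sum]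
    rw [← Finset.sum_add_distrib]
    refine Finset.sum_congr rfl fun i _ => ?_
    simp only [← Finset.mul_sum]
    ring
  rw [expand]
  congr 1
  congr 1
  -- ∑ i ∑ l ∑ k  Dq k * (A l i * B l i k)  =  ∑ k Dq k * (Dq k / 2)
  have hswap2 : ∑ i, ∑ l, ∑ k, fderiv ℝ (qf n N ε u) x (ee n k)
      * (Af n N u l i x * Bf n N u l i k x)
      = ∑ k, fderiv ℝ (qf n N ε u) x (ee n k) * (∑ i, ∑ l, Af n N u l i x
          * Bf n N u l i k x) := by
    have st1 : ∀ i : Fin n, ∑ l, ∑ k, fderiv ℝ (qf n N ε u) x (ee n k)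
        * (Af n N u l i x * Bf n N u l i k x)
        = ∑ k, ∑ l, fderiv ℝ (qf n N ε u) x (ee n k)
            * (Af n N u l i x * Bf n N u l i k x) := fun i => Finset.sum_comm
    rw [Finset.sum_congr rfl fun i (_ : i ∈ univ) => st1 i, Finset.sum_comm]
    refine Finset.sum_congr rfl fun k _ => ?_
    simp only [← Finset.mul_sum]
  rw [hswap2]
  refine Finset.sum_congr rfl fun k _ => ?_
  congr 1
  have e : ∑ i, ∑ l, 2 * Af n N u l i x * Bf n N u l i k x
      = 2 * ∑ i, ∑ l, Af n N u l i x * Bf n N u l i k x := by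
    rw [Finset.mul_sum]
    refine Finset.sum_congr rfl fun i _ => ?_
    rw [Finset.mul_sum]
    exact Finset.sum_congr rfl fun l _ => by ring
  have hd : fderiv ℝ (qf n N ε u) x (ee n k)
      = ∑ i, ∑ l, 2 * Af n N u l i x * Bf n N u l i k x := dqf hU hu hx k
  rw [e] at hd
  rw [hd]
  ring

lemma diffc (hε : 0 < ε) (hU : IsOpen U) (hu : ∀ l, ContDiffOn ℝ (⊤ : ℕ∞) (u l) U)
    (c : Fin n → Fin n → EuclideanSpace ℝ (Fin n) → ℝ)
    (hc' : ∀ (i j : Fin n) (y : EuclideanSpace ℝ (Fin n)), c i j y =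
      (qf n N ε u y)⁻¹ * ((p - 2) * ∑ l, Af n N u l i y * Af n N u l j y +
        (if i = j then (1:ℝ) else 0) * qf n N ε u y))
    (i j : Fin n) {x : EuclideanSpace ℝ (Fin n)} (hx : x ∈ U) :
    DifferentiableAt ℝ (c i j) x := by
  have hrw : c i j = fun y => (qf n N ε u y)⁻¹ *
      ((p - 2) * ∑ l, Af n N u l i y * Af n N u l j y +
        (if i = j then (1:ℝ) else 0) * qf n N ε u y) := funext (hc' i j)
  rw [hrw]
  have dq : DifferentiableAt ℝ (qf n N ε u) x := diffq hU hu hx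
  exact (dq.inv (qf_pos hε x).ne').mul
    (((DifferentiableAt.fun_sum fun l _ =>
        (diffA hU hu l i hx).mul (diffA hU hu l j hx)).const_mul _).add (dq.const_mul _))

lemma csLemma (hε : 0 < ε) (hU : IsOpen U) (hu : ∀ l, ContDiffOn ℝ (⊤ : ℕ∞) (u l) U)
    {x : EuclideanSpace ℝ (Fin n)} (hx : x ∈ U) :
    ∑ j, fderiv ℝ (qf n N ε u) x (ee n j) ^ 2
      ≤ 4 * qf n N ε u x * ∑ i, ∑ l, ∑ k, Bf n N u l i k x ^ 2 := by
  have hA2 : ∑ i, ∑ l, Af n N u l i x ^ 2 ≤ qf n N ε u x := by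
    unfold qf; linarith
  have hperj : ∀ j : Fin n, fderiv ℝ (qf n N ε u) x (ee n j) ^ 2
      ≤ 4 * qf n N ε u x * ∑ i, ∑ l, Bf n N u l i j x ^ 2 := by
    intro j
    rw [dqf hU hu hx j]
    have eprod : ∑ i, ∑ l, 2 * Af n N u l i x * Bf n N u l i j x
        = 2 * ∑ z : Fin n × Fin N, Af n N u z.2 z.1 x * Bf n N u z.2 z.1 j x := by
      rw [Fintype.sum_prod_type, Finset.mul_sum]
      refine Finset.sum_congr rfl fun i _ => ?_
      rw [Finset.mul_sum]
      exact Finset.sum_congr rfl fun l _ => by ring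
    have ea : ∑ z : Fin n × Fin N, Af n N u z.2 z.1 x ^ 2 = ∑ i, ∑ l, Af n N u l i x ^ 2 :=
      Fintype.sum_prod_type _
    have eb : ∑ z : Fin n × Fin N, Bf n N u z.2 z.1 j x ^ 2 = ∑ i, ∑ l, Bf n N u l i j x ^ 2 :=
      Fintype.sum_prod_type _
    have cs := Finset.sum_mul_sq_le_sq_mul_sq univ
      (fun z : Fin n × Fin N => Af n N u z.2 z.1 x) (fun z => Bf n N u z.2 z.1 j x)
    rw [ea, eb] at cs
    have hBnn : (0:ℝ) ≤ ∑ i, ∑ l, Bf n N u l i j x ^ 2 := by positivity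
    rw [eprod]
    nlinarith [cs, hA2, hBnn]
  calc ∑ j, fderiv ℝ (qf n N ε u) x (ee n j) ^ 2
      ≤ ∑ j, 4 * qf n N ε u x * ∑ i, ∑ l, Bf n N u l i j x ^ 2 :=
        Finset.sum_le_sum fun j _ => hperj j
    _ = 4 * qf n N ε u x * ∑ j, ∑ i, ∑ l, Bf n N u l i j x ^ 2 := by
        rw [Finset.mul_sum]
    _ = 4 * qf n N ε u x * ∑ i, ∑ l, ∑ k, Bf n N u l i k x ^ 2 := by
        congr 1
        rw [Finset.sum_comm]
        exact Finset.sum_congr rfl fun i _ => Finset.sum_comm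

end Stmt9Aux

theorem stmt_9 (n N : ℕ) (hn : 1 ≤ n) (hN : 1 ≤ N) (ε p : ℝ) (hε : 0 < ε) (hp : 1 < p)
    (U : Set (EuclideanSpace ℝ (Fin n))) (hU : IsOpen U)
    (u : Fin N → EuclideanSpace ℝ (Fin n) → ℝ)
    (hu : ∀ l, ContDiffOn ℝ (⊤ : ℕ∞) (u l) U)
    (hsys : pLapSys n N ε p U u)
    (h : EuclideanSpace ℝ (Fin n) → ℝ)
    (hh : ∀ x, h x = Real.sqrt (ε + ∑ i : Fin n, ∑ l : Fin N,
      (fderiv ℝ (u l) x (EuclideanSpace.single i 1)) ^ 2))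
    (c : Fin n → Fin n → EuclideanSpace ℝ (Fin n) → ℝ)
    (hc : ∀ i j x, c i j x =
      (ε + ∑ i' : Fin n, ∑ l' : Fin N,
          (fderiv ℝ (u l') x (EuclideanSpace.single i' 1)) ^ 2)⁻¹ *
        ((p - 2) * ∑ l : Fin N, fderiv ℝ (u l) x (EuclideanSpace.single i 1) *
            fderiv ℝ (u l) x (EuclideanSpace.single j 1) +
          (if i = j then (1 : ℝ) else 0) *
            (ε + ∑ i' : Fin n, ∑ l' : Fin N,
              (fderiv ℝ (u l') x (EuclideanSpace.single i' 1)) ^ 2)))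
    (L : (EuclideanSpace ℝ (Fin n) → ℝ) → EuclideanSpace ℝ (Fin n) → ℝ)
    (hL : ∀ f x, L f x =
      ∑ i : Fin n, ∑ j : Fin n,
        fderiv ℝ (fun y => c i j y * fderiv ℝ f y (EuclideanSpace.single j 1))
          x (EuclideanSpace.single i 1)) :
    ∀ x ∈ U,
    ∀ x ∈ U,
      p * min 1 (p - 1) * h x ^ (p - 2) *
          (∑ j : Fin n, (fderiv ℝ h x (EuclideanSpace.single j 1)) ^ 2) ≤
        L (fun y => h y ^ p) x := by
  intro _ _ x hx
  have hQpos : 0 < qf n N ε u x := qf_pos hε x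
  have hQ : qf n N ε u x ≠ 0 := hQpos.ne'
  have hc' : ∀ (i j : Fin n) (y : EuclideanSpace ℝ (Fin n)), c i j y =
      (qf n N ε u y)⁻¹ * ((p - 2) * ∑ l, Af n N u l i y * Af n N u l j y +
        (if i = j then (1:ℝ) else 0) * qf n N ε u y) := fun i j y => hc i j y
  have hsys' : ∀ y ∈ U, ∀ l : Fin N,
      ∑ i, fderiv ℝ (gf n N ε p u l i) y (ee n i) = 0 := fun y hy l => hsys y hy l
  have hhq : ∀ z, h z = Real.sqrt (qf n N ε u z) := fun z => hh z
  have hEq : h = fun z => Real.sqrt (qf n N ε u z) := funext hhq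
  have hvEq : (fun y => h y ^ p) = vf n N ε p u := by
    funext z
    rw [hhq z, Real.sqrt_eq_rpow, ← Real.rpow_mul (qf_pos hε z).le,
      show (1:ℝ) / 2 * p = p / 2 by ring]
    rfl
  rw [hL, hvEq]
  show p * min 1 (p - 1) * h x ^ (p - 2) * (∑ j, fderiv ℝ h x (ee n j) ^ 2)
      ≤ ∑ i, ∑ j, fderiv ℝ (fun y => c i j y * fderiv ℝ (vf n N ε p u) y (ee n j)) x (ee n i)
  -- RHS
  have hDvdiff : ∀ j : Fin n,
      DifferentiableAt ℝ (fun y => fderiv ℝ (vf n N ε p u) y (ee n j)) x :=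
    fun j => diff_fderiv_apply (smoothv hε hU hu 2 hx) _
  have hPdiff : ∀ i j : Fin n,
      DifferentiableAt ℝ (fun y => c i j y * fderiv ℝ (vf n N ε p u) y (ee n j)) x :=
    fun i j => (diffc hε hU hu c hc' i j hx).mul (hDvdiff j)
  have hstep2 : ∀ i : Fin n,
      fderiv ℝ (fun y => ∑ j, c i j y * fderiv ℝ (vf n N ε p u) y (ee n j)) x
        = fderiv ℝ (fun y => p * ∑ l, ∑ k, Af n N u l k y
            * fderiv ℝ (gf n N ε p u l i) y (ee n k)) x := by
    intro i
    apply Filter.EventuallyEq.fderiv_eq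
    filter_upwards [hU.mem_nhds hx] with y hy
    exact sigmaId hε hU hu c hc' hy i
  have hRHS : ∑ i, ∑ j, fderiv ℝ
        (fun y => c i j y * fderiv ℝ (vf n N ε p u) y (ee n j)) x (ee n i)
      = p * (p / 2 - 1) * qf n N ε u x ^ (p / 2 - 2)
          * ∑ k, fderiv ℝ (qf n N ε u) x (ee n k) * (fderiv ℝ (qf n N ε u) x (ee n k) / 2)
        + p * qf n N ε u x ^ (p / 2 - 1) * ∑ i, ∑ l, ∑ k, Bf n N u l i k x ^ 2 := by
    have st1 : ∑ i, ∑ j, fderiv ℝ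
          (fun y => c i j y * fderiv ℝ (vf n N ε p u) y (ee n j)) x (ee n i)
        = ∑ i, fderiv ℝ (fun y => ∑ j, c i j y * fderiv ℝ (vf n N ε p u) y (ee n j)) x
            (ee n i) :=
      Finset.sum_congr rfl fun i _ => (fda_sum univ (fun j _ => hPdiff i j) (ee n i)).symm
    have st2 : ∑ i, fderiv ℝ
          (fun y => ∑ j, c i j y * fderiv ℝ (vf n N ε p u) y (ee n j)) x (ee n i)
        = ∑ i, fderiv ℝ (fun y => p * ∑ l, ∑ k, Af n N u l k y
            * fderiv ℝ (gf n N ε p u l i) y (ee n k)) x (ee n i) :=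
      Finset.sum_congr rfl fun i _ => by rw [hstep2 i]
    rw [st1, st2]
    exact LvalFormula hε hU hu hsys' hx
  rw [hRHS]
  -- LHS
  have hhp2 : h x ^ (p - 2) = qf n N ε u x ^ (p / 2 - 1) := by
    rw [hhq x, Real.sqrt_eq_rpow, ← Real.rpow_mul hQpos.le,
      show (1:ℝ) / 2 * (p - 2) = p / 2 - 1 by ring]
  have hdh : ∀ j : Fin n, fderiv ℝ h x (ee n j)
      = 1 / (2 * Real.sqrt (qf n N ε u x)) * fderiv ℝ (qf n N ε u) x (ee n j) := by
    intro j; rw [hEq]; exact fda_sqrt (diffq hU hu hx) hQ (ee n j)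
  have coeff : (1 / (2 * Real.sqrt (qf n N ε u x))) ^ 2 = (qf n N ε u x)⁻¹ / 4 := by
    rw [div_pow, mul_pow, Real.sq_sqrt hQpos.le, one_pow, show (2:ℝ)^2 = 4 by norm_num,
      one_div, mul_inv]
    ring
  have hsumdh : ∑ j, fderiv ℝ h x (ee n j) ^ 2
      = (qf n N ε u x)⁻¹ / 4 * ∑ j, fderiv ℝ (qf n N ε u) x (ee n j) ^ 2 := by
    calc ∑ j, fderiv ℝ h x (ee n j) ^ 2
        = ∑ j, (1 / (2 * Real.sqrt (qf n N ε u x))) ^ 2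
            * fderiv ℝ (qf n N ε u) x (ee n j) ^ 2 :=
          Finset.sum_congr rfl fun j _ => by rw [hdh j, mul_pow]
      _ = (1 / (2 * Real.sqrt (qf n N ε u x))) ^ 2
            * ∑ j, fderiv ℝ (qf n N ε u) x (ee n j) ^ 2 := by rw [← Finset.mul_sum]
      _ = _ := by rw [coeff]
  rw [hhp2, hsumdh]
  -- final inequality
  have hR1 : 0 < qf n N ε u x ^ (p / 2 - 1) := Real.rpow_pos_of_pos hQpos _
  have e3 : qf n N ε u x ^ (p / 2 - 2) = qf n N ε u x ^ (p / 2 - 1) * (qf n N ε u x)⁻¹ := by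
    rw [show (qf n N ε u x)⁻¹ = qf n N ε u x ^ (-1 : ℝ) by rw [Real.rpow_neg_one],
      ← Real.rpow_add hQpos]
    congr 1
    ring
  have hhalf : ∑ k, fderiv ℝ (qf n N ε u) x (ee n k) * (fderiv ℝ (qf n N ε u) x (ee n k) / 2)
      = (∑ k, fderiv ℝ (qf n N ε u) x (ee n k) ^ 2) / 2 := by
    rw [Finset.sum_div]
    exact Finset.sum_congr rfl fun k _ => by ring
  rw [e3, hhalf]
  have hCS := csLemma hε hU hu hx
  have hQGnn : (0:ℝ) ≤ ∑ j, fderiv ℝ (qf n N ε u) x (ee n j) ^ 2 :=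
    Finset.sum_nonneg fun j _ => sq_nonneg _
  have hS2nn : (0:ℝ) ≤ ∑ i, ∑ l, ∑ k, Bf n N u l i k x ^ 2 :=
    Finset.sum_nonneg fun i _ => Finset.sum_nonneg fun l _ =>
      Finset.sum_nonneg fun k _ => sq_nonneg _
  have hinvnn : (0:ℝ) ≤ (qf n N ε u x)⁻¹ := inv_nonneg.2 hQpos.le
  have hZ : (qf n N ε u x)⁻¹ * ∑ j, fderiv ℝ (qf n N ε u) x (ee n j) ^ 2
      ≤ 4 * ∑ i, ∑ l, ∑ k, Bf n N u l i k x ^ 2 := by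
    have h1 := mul_le_mul_of_nonneg_left hCS hinvnn
    have h2 : (qf n N ε u x)⁻¹ * (4 * qf n N ε u x
        * ∑ i, ∑ l, ∑ k, Bf n N u l i k x ^ 2)
        = 4 * ∑ i, ∑ l, ∑ k, Bf n N u l i k x ^ 2 := by
      rw [show (qf n N ε u x)⁻¹ * (4 * qf n N ε u x * ∑ i, ∑ l, ∑ k, Bf n N u l i k x ^ 2)
          = (qf n N ε u x * (qf n N ε u x)⁻¹) * (4 * ∑ i, ∑ l, ∑ k, Bf n N u l i k x ^ 2)
        by ring, mul_inv_cancel₀ hQ, one_mul]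
    linarith
  have ppos : (0:ℝ) < p := by linarith
  rcases le_or_gt p 2 with hple | hpgt
  · rw [min_eq_right (by linarith : p - 1 ≤ 1)]
    nlinarith [mul_nonneg (mul_pos ppos hR1).le
      (by linarith : (0:ℝ) ≤ 4 * (∑ i, ∑ l, ∑ k, Bf n N u l i k x ^ 2)
        - (qf n N ε u x)⁻¹ * ∑ j, fderiv ℝ (qf n N ε u) x (ee n j) ^ 2)]
  · rw [min_eq_left (by linarith : (1:ℝ) ≤ p - 1)]
    nlinarith [mul_nonneg (mul_pos ppos hR1).le
      (by linarith : (0:ℝ) ≤ 4 * (∑ i, ∑ l, ∑ k, Bf n N u l i k x ^ 2)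
        - (qf n N ε u x)⁻¹ * ∑ j, fderiv ℝ (qf n N ε u) x (ee n j) ^ 2),
      mul_nonneg (mul_nonneg (mul_pos ppos hR1).le (by linarith : (0:ℝ) ≤ p - 2))
        (mul_nonneg hinvnn hQGnn)]
end
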